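/- Context-free monoidal languages are closed under images of strict monoidal functors: if L is a context-free monoidal language over C and F : C → D is a strict monoidal functor, then F[L] is a context-free monoidal language over D. -/

import Mathlib

open CategoryTheory

/-- A strict monoidal structure on a category whose objects form a monoid:
a tensor on morphisms that is functorial and strictly associative and unital. -/
class SMC (C : Type u) [Category.{v} C] [Monoid C] where
  tens : ∀ {W X Y Z : C}, (W ⟶ X) → (Y ⟶ Z) → (W * Y ⟶ X * Z)
  tens_id : ∀ (X Y : C), tens (𝟙 X) (𝟙 Y) = 𝟙 (X * Y)
  tens_comp : ∀ {X₁ X₂ X₃ Y₁ Y₂ Y₃ : C} (f₁ : X₁ ⟶ X₂) (f₂ : X₂ ⟶ X₃)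
      (g₁ : Y₁ ⟶ Y₂) (g₂ : Y₂ ⟶ Y₃),
      tens (f₁ ≫ f₂) (g₁ ≫ g₂) = tens f₁ g₁ ≫ tens f₂ g₂
  tens_assoc : ∀ {X X' Y Y' Z Z' : C} (f : X ⟶ X') (g : Y ⟶ Y') (h : Z ⟶ Z'),
      tens (tens f g) h =
        eqToHom (mul_assoc X Y Z) ≫ tens f (tens g h) ≫ eqToHom (mul_assoc X' Y' Z').symm
  tens_one_left : ∀ {X Y : C} (f : X ⟶ Y),
      tens (𝟙 (1 : C)) f = eqToHom (one_mul X) ≫ f ≫ eqToHom (one_mul Y).symm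
  tens_one_right : ∀ {X Y : C} (f : X ⟶ Y),
      tens f (𝟙 (1 : C)) = eqToHom (mul_one X) ≫ f ≫ eqToHom (mul_one Y).symm

/-- A raw optic over a strict monoidal category `C`, from the list of pairs `l` to the
pair `⟨X|T⟩`: a tuple of morphisms `f₀ : X ⟶ M₁*A₁*N₁`,
`fᵢ : Mᵢ*Bᵢ*Nᵢ ⟶ Mᵢ₊₁*Aᵢ₊₁*Nᵢ₊₁`, `fₙ : Mₙ*Bₙ*Nₙ ⟶ T` for a choice of middle objects
`Mᵢ`, `Nᵢ`.  A nullary raw optic is a single morphism `X ⟶ T`. -/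
inductive RawT (C : Type u) [Category.{v} C] [Monoid C] [SMC C] :
    C → List (C × C) → C → Type (max u v)
  | nil {X T : C} (f : X ⟶ T) : RawT C X [] T
  | cons {X T A B : C} {l : List (C × C)} (M N : C) (f : X ⟶ M * A * N)
      (rest : RawT C (M * B * N) l T) : RawT C X ((A, B) :: l) T

namespace RawT

variable {C : Type u} [Category.{v} C] [Monoid C] [SMC C]

def castL {X T : C} {l l' : List (C × C)} (h : l = l') (r : RawT C X l T) :
    RawT C X l' T := by subst h; exact r

def castSrc {X X' T : C} {l : List (C × C)} (h : X = X') (r : RawT C X l T) :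
    RawT C X' l T := by subst h; exact r

/-- Whiskering a raw optic on both sides by objects `M`, `N`. -/
def whisk (M N : C) : ∀ {X T : C} {l : List (C × C)},
    RawT C X l T → RawT C (M * X * N) l (M * T * N)
  | _, _, _, .nil f => .nil (SMC.tens (SMC.tens (𝟙 M) f) (𝟙 N))
  | _, _, _, .cons (A := A) (B := B) M' N' f rest =>
      .cons (M * M') (N' * N)
        (SMC.tens (SMC.tens (𝟙 M) f) (𝟙 N) ≫ eqToHom (by simp [mul_assoc]))
        ((whisk M N rest).castSrc (by simp [mul_assoc]))

/-- Precompose a raw optic with a morphism. -/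
def precomp {W X T : C} {l : List (C × C)} (e : W ⟶ X) :
    RawT C X l T → RawT C W l T
  | .nil f => .nil (e ≫ f)
  | .cons M N f rest => .cons M N (e ≫ f) rest

/-- Concatenation of raw optics. -/
def append : ∀ {X T U : C} {l l' : List (C × C)},
    RawT C X l T → RawT C T l' U → RawT C X (l ++ l') U
  | _, _, _, _, _, .nil f, s => s.precomp f
  | _, _, _, _, _, .cons M N f rest, s => .cons M N f (rest.append s)

/-- Composition of raw optics: substitution of a raw optic `G` into the hole of `F`
in position `l₁.length`, whiskering the components of `G` by the middle objects. -/
def subst : ∀ (l₁ : List (C × C)) {l₂ : List (C × C)} {X T A B : C} {l' : List (C × C)},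
    RawT C X (l₁ ++ (A, B) :: l₂) T → RawT C A l' B → RawT C X (l₁ ++ l' ++ l₂) T
  | [], _, _, _, _, _, _, F, G =>
      match F with
      | .cons M N f rest => ((whisk M N G).append rest).precomp f
  | _ :: l₁, _, _, _, _, _, _, F, G =>
      match F with
      | .cons M N f rest => .cons M N f (subst l₁ rest G)

/-- The identity raw optic on `⟨A|B⟩`. -/
def idRaw (A B : C) : RawT C A [(A, B)] B :=
  .cons 1 1 (eqToHom (by simp)) (.nil (eqToHom (by simp)))

end RawT

/-- Diagram contexts over a strict monoidal category `C`: formal terms built from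
morphisms of `C`, named typed holes, sequential and parallel composition. -/
inductive CTm (C : Type u) [Category.{v} C] [Monoid C] [SMC C] : C → C → Type (max u v)
  | of {X Y : C} (f : X ⟶ Y) : CTm C X Y
  | hole (n : ℕ) (A B : C) : CTm C A B
  | seq {X Y Z : C} : CTm C X Y → CTm C Y Z → CTm C X Z
  | par {X Y X' Y' : C} : CTm C X Y → CTm C X' Y' → CTm C (X * X') (Y * Y')

namespace CTm

variable {C : Type u} [Category.{v} C] [Monoid C] [SMC C]

def castc {X X' Y Y' : C} (h1 : X = X') (h2 : Y = Y') (t : CTm C X Y) : CTm C X' Y' := by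
  subst h1; subst h2; exact t

/-- Renaming of holes. -/
def rename (ρ : ℕ → ℕ) : ∀ {X Y : C}, CTm C X Y → CTm C X Y
  | _, _, .of f => .of f
  | _, _, .hole n A B => .hole (ρ n) A B
  | _, _, .seq a b => .seq (a.rename ρ) (b.rename ρ)
  | _, _, .par a b => .par (a.rename ρ) (b.rename ρ)

/-- The list of (named, typed) holes occurring in a diagram context, in order. -/
def holesOf : ∀ {X Y : C}, CTm C X Y → List (ℕ × C × C)
  | _, _, .of _ => []
  | _, _, .hole n A B => [(n, A, B)]
  | _, _, .seq a b => a.holesOf ++ b.holesOf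
  | _, _, .par a b => a.holesOf ++ b.holesOf

/-- Filling the holes named `n` of type `⟨A|B⟩` with a diagram context `u`. -/
def fill [DecidableEq C] (n : ℕ) {A B : C} (u : CTm C A B) :
    ∀ {X Y : C}, CTm C X Y → CTm C X Y
  | _, _, .of f => .of f
  | _, _, .hole m A' B' =>
      if h : m = n ∧ A = A' ∧ B = B' then u.castc h.2.1 h.2.2 else .hole m A' B'
  | _, _, .seq a b => .seq (fill n u a) (fill n u b)
  | _, _, .par a b => .par (fill n u a) (fill n u b)

/-- Evaluation of a hole-free diagram context as a morphism of `C`. -/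
def evalO : ∀ {X Y : C}, CTm C X Y → Option (X ⟶ Y)
  | _, _, .of f => some f
  | _, _, .hole _ _ _ => none
  | _, _, .seq a b => do pure ((← a.evalO) ≫ (← b.evalO))
  | _, _, .par a b => do pure (SMC.tens (← a.evalO) (← b.evalO))

end CTm

/-- Equality of diagram contexts over a strict monoidal category: the congruence
generated by the strict monoidal equations together with the identification of formal
composites of morphisms of `C` with actual composites in `C`. -/
inductive CTmEq (C : Type u) [Category.{v} C] [Monoid C] [SMC C] :
    ∀ {X Y : C}, CTm C X Y → CTm C X Y → Prop
  | refl {X Y} (t : CTm C X Y) : CTmEq C t t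
  | symm {X Y} {t u : CTm C X Y} : CTmEq C t u → CTmEq C u t
  | trans {X Y} {t u v : CTm C X Y} : CTmEq C t u → CTmEq C u v → CTmEq C t v
  | seq_congr {X Y Z} {t t' : CTm C X Y} {u u' : CTm C Y Z} :
      CTmEq C t t' → CTmEq C u u' → CTmEq C (t.seq u) (t'.seq u')
  | par_congr {X Y X' Y'} {t t' : CTm C X Y} {u u' : CTm C X' Y'} :
      CTmEq C t t' → CTmEq C u u' → CTmEq C (t.par u) (t'.par u')
  | of_comp {X Y Z} (f : X ⟶ Y) (g : Y ⟶ Z) :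
      CTmEq C (.of (f ≫ g)) ((CTm.of f).seq (.of g))
  | of_tens {X Y X' Y'} (f : X ⟶ Y) (g : X' ⟶ Y') :
      CTmEq C (.of (SMC.tens f g)) ((CTm.of f).par (.of g))
  | seq_assoc {W X Y Z} (t₁ : CTm C W X) (t₂ : CTm C X Y) (t₃ : CTm C Y Z) :
      CTmEq C ((t₁.seq t₂).seq t₃) (t₁.seq (t₂.seq t₃))
  | seq_id_right {X Y} (t : CTm C X Y) : CTmEq C (t.seq (.of (𝟙 Y))) t
  | seq_id_left {X Y} (t : CTm C X Y) : CTmEq C ((CTm.of (𝟙 X)).seq t) t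
  | par_assoc {X₁ Y₁ X₂ Y₂ X₃ Y₃} (t₁ : CTm C X₁ Y₁) (t₂ : CTm C X₂ Y₂) (t₃ : CTm C X₃ Y₃) :
      CTmEq C (((t₁.par t₂).par t₃).castc (mul_assoc X₁ X₂ X₃) (mul_assoc Y₁ Y₂ Y₃))
        (t₁.par (t₂.par t₃))
  | par_one_left {X Y} (t : CTm C X Y) :
      CTmEq C (((CTm.of (𝟙 (1 : C))).par t).castc (one_mul X) (one_mul Y)) t
  | par_one_right {X Y} (t : CTm C X Y) :
      CTmEq C ((t.par (.of (𝟙 (1 : C)))).castc (mul_one X) (mul_one Y)) t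
  | interchange {X Y Z X' Y' Z'} (t₁ : CTm C X Y) (t₂ : CTm C Y Z)
      (t₃ : CTm C X' Y') (t₄ : CTm C Y' Z') :
      CTmEq C ((t₁.seq t₂).par (t₃.seq t₄)) ((t₁.par t₃).seq (t₂.par t₄))
  | cast_eq {X X' Y Y'} (h1 : X = X') (h2 : Y = Y') (t : CTm C X Y) :
      CTmEq C (t.castc h1 h2) ((CTm.of (CategoryTheory.eqToHom h1.symm)).seq
        (t.seq (.of (CategoryTheory.eqToHom h2))))

/-- Gluing a raw optic into a diagram context, numbering its holes `k, k+1, …`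
from left to right. -/
def RawT.glue {C : Type u} [Category.{v} C] [Monoid C] [SMC C] :
    ∀ {X T : C} {l : List (C × C)}, ℕ → RawT C X l T → CTm C X T
  | _, _, _, _, .nil f => .of f
  | _, _, _, k, .cons (A := A) (B := B) M N f rest =>
      (CTm.of f).seq
        ((((CTm.of (𝟙 M)).par (.hole k A B)).par (.of (𝟙 N))).seq (rest.glue (k + 1)))

open CategoryTheory

/-- A context-free monoidal grammar over a strict monoidal category `C`: a finite
multigraph of non-terminals typed by pairs of objects of `C`, each production being
mapped to a diagram context whose holes are exactly the (typed) inputs of the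
production. -/
structure CFG (C : Type u) [Category.{v} C] [Monoid C] [SMC C] where
  V : Type
  finV : Finite V
  ty : V → C × C
  Prd : List V → V → Type
  finP : Finite ((l : List V) × (Y : V) × Prd l Y)
  rule : ∀ {l : List V} {Y : V}, Prd l Y → CTm C (ty Y).1 (ty Y).2
  rule_holes : ∀ {l : List V} {Y : V} (r : Prd l Y),
    (rule r).holesOf.Perm ((List.range l.length).zip (l.map ty))

namespace CFG

variable {C : Type u} [Category.{v} C] [Monoid C] [SMC C]

mutual
/-- Closed derivations of the free multicategory on the multigraph of a grammar. -/
inductive Deriv (𝒢 : CFG C) : 𝒢.V → Type (max u v)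
  | node {l : List 𝒢.V} {Y : 𝒢.V} (r : 𝒢.Prd l Y) (ds : DerivList 𝒢 l) : Deriv 𝒢 Y
inductive DerivList (𝒢 : CFG C) : List 𝒢.V → Type (max u v)
  | nil : DerivList 𝒢 []
  | cons {v : 𝒢.V} {l : List 𝒢.V} : Deriv 𝒢 v → DerivList 𝒢 l → DerivList 𝒢 (v :: l)
end

variable [DecidableEq C]

mutual
/-- The image of a closed derivation under the multifunctor induced by the grammar:
the diagram context obtained by recursively filling the holes of the rules. -/
def evalTm {𝒢 : CFG C} : ∀ {v : 𝒢.V}, Deriv 𝒢 v → CTm C (𝒢.ty v).1 (𝒢.ty v).2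
  | _, .node r ds => fillListFrom 0 ds (𝒢.rule r)
def fillListFrom {𝒢 : CFG C} {X Y : C} :
    ∀ {l : List 𝒢.V}, ℕ → DerivList 𝒢 l → CTm C X Y → CTm C X Y
  | _, _, .nil, t => t
  | _, k, .cons d ds, t => fillListFrom (k + 1) ds (CTm.fill k (evalTm d) t)
end

/-- The language of a context-free monoidal grammar at a start sort. -/
def lang (𝒢 : CFG C) (S : 𝒢.V) : Set ((𝒢.ty S).1 ⟶ (𝒢.ty S).2) :=
  {f | ∃ d : Deriv 𝒢 S, (evalTm d).evalO = some f}

/-- The language, transported along an identification of the type of the start sort. -/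
def langAt (𝒢 : CFG C) (S : 𝒢.V) {X Y : C} (h : 𝒢.ty S = (X, Y)) : Set (X ⟶ Y) :=
  {f | ∃ g ∈ 𝒢.lang S,
    f = eqToHom (congrArg Prod.fst h).symm ≫ g ≫ eqToHom (congrArg Prod.snd h)}

end CFG

open CategoryTheory

/-- A strict monoidal functor between strict monoidal categories. -/
structure SMF (C : Type u) (D : Type u') [Category.{v} C] [Monoid C] [SMC C]
    [Category.{v'} D] [Monoid D] [SMC D] where
  obj : C →* D
  map : ∀ {X Y : C}, (X ⟶ Y) → (obj X ⟶ obj Y)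
  map_id : ∀ X : C, map (𝟙 X) = 𝟙 (obj X)
  map_comp : ∀ {X Y Z : C} (f : X ⟶ Y) (g : Y ⟶ Z), map (f ≫ g) = map f ≫ map g
  map_tens : ∀ {W X Y Z : C} (f : W ⟶ X) (g : Y ⟶ Z),
      map (SMC.tens f g) =
        eqToHom (obj.map_mul W Y) ≫ SMC.tens (map f) (map g) ≫ eqToHom (obj.map_mul X Z).symm

/-! Applying `F` to every rule of a grammar `𝒢` gives a grammar over `D` with the same
non-terminals and productions, so its derivations are exactly those of `𝒢`. The diagram
context of a derivation is built by filling the holes of rules with closed diagram contexts,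
and `F` commutes with filling and with evaluation. The one subtlety is that holes are matched
by name *and* type, and `F` may identify types: filling commutes with `F` only when every hole
of the given name already has the type of the filler, which is guaranteed by the typing of
the rules. -/

section HoleSig

variable {α : Type*}

/-- The holes `(k, t₀), (k + 1, t₁), …` of a context whose inputs, numbered from `k`,
have types `ts`. -/
def holeSig (k : ℕ) (ts : List α) : List (ℕ × α) :=
  (List.range' k ts.length).zip ts

theorem holeSig_cons (k : ℕ) (a : α) (ts : List α) :
    holeSig k (a :: ts) = (k, a) :: holeSig (k + 1) ts := by
  simp [holeSig, List.range'_succ]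

theorem le_fst_of_mem_holeSig {k : ℕ} {ts : List α} {p : ℕ × α}
    (hp : p ∈ holeSig k ts) : k ≤ p.1 :=
  (List.mem_range'_1.mp (List.of_mem_zip hp).1).1

theorem snd_eq_of_subset_holeSig_cons {k : ℕ} {a : α} {ts : List α} {s : List (ℕ × α)}
    (hs : s ⊆ holeSig k (a :: ts)) : ∀ p ∈ s, p.1 = k → p.2 = a := by
  intro p hp hpk
  rcases List.mem_cons.mp (holeSig_cons k a ts ▸ hs hp) with rfl | hp'
  · rfl
  · exact absurd (le_fst_of_mem_holeSig hp') (by omega)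

end HoleSig

section ImageGrammar

variable {C : Type u} {D : Type u'} [Category.{v} C] [Monoid C] [SMC C]
  [Category.{v'} D] [Monoid D] [SMC D]

theorem SMF.map_eqToHom (F : SMF C D) {X Y : C} (h : X = Y) :
    F.map (eqToHom h) = eqToHom (congrArg F.obj h) := by
  subst h; exact F.map_id X

namespace CTm

theorem holesOf_castc {X X' Y Y' : C} (h1 : X = X') (h2 : Y = Y') (t : CTm C X Y) :
    (t.castc h1 h2).holesOf = t.holesOf := by
  subst h1; subst h2; rfl

theorem evalO_castc {X X' Y Y' : C} (h1 : X = X') (h2 : Y = Y') (t : CTm C X Y) :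
    (t.castc h1 h2).evalO = t.evalO.map (fun f => eqToHom h1.symm ≫ f ≫ eqToHom h2) := by
  subst h1; subst h2
  show t.evalO = _
  cases t.evalO <;> simp

theorem fill_castc [DecidableEq C] (n : ℕ) {A B : C} (u : CTm C A B)
    {X X' Y Y' : C} (h1 : X = X') (h2 : Y = Y') (t : CTm C X Y) :
    fill n u (t.castc h1 h2) = (fill n u t).castc h1 h2 := by
  subst h1; subst h2; rfl

theorem fill_hole_self [DecidableEq C] (n : ℕ) {A B : C} (u : CTm C A B) :
    fill n u (hole n A B) = u :=
  dif_pos ⟨rfl, rfl, rfl⟩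

theorem fill_hole_of_ne [DecidableEq C] {n m : ℕ} (h : m ≠ n) {A B : C} (u : CTm C A B)
    (A' B' : C) : fill n u (hole m A' B') = hole m A' B' :=
  dif_neg fun h' => h h'.1

/-- The functor `Ctx(F)` on diagram contexts. -/
def mapF (F : SMF C D) : ∀ {X Y : C}, CTm C X Y → CTm D (F.obj X) (F.obj Y)
  | _, _, .of f => .of (F.map f)
  | _, _, .hole n A B => .hole n (F.obj A) (F.obj B)
  | _, _, .seq a b => .seq (a.mapF F) (b.mapF F)
  | _, _, .par a b =>
      ((a.mapF F).par (b.mapF F)).castc (F.obj.map_mul _ _).symm (F.obj.map_mul _ _).symm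

theorem holesOf_mapF (F : SMF C D) : ∀ {X Y : C} (t : CTm C X Y),
    (t.mapF F).holesOf = t.holesOf.map (fun p => (p.1, F.obj p.2.1, F.obj p.2.2))
  | _, _, .of _ => rfl
  | _, _, .hole _ _ _ => rfl
  | _, _, .seq a b => by
      simp [mapF, holesOf, holesOf_mapF F a, holesOf_mapF F b]
  | _, _, .par a b => by
      simp [mapF, holesOf, holesOf_castc, holesOf_mapF F a, holesOf_mapF F b]

theorem evalO_mapF (F : SMF C D) : ∀ {X Y : C} (t : CTm C X Y),
    (t.mapF F).evalO = t.evalO.map F.map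
  | _, _, .of _ => rfl
  | _, _, .hole _ _ _ => rfl
  | _, _, .seq a b => by
      cases ha : a.evalO <;> cases hb : b.evalO <;>
        simp [mapF, evalO, evalO_mapF F a, evalO_mapF F b, ha, hb, F.map_comp]
  | _, _, .par a b => by
      cases ha : a.evalO <;> cases hb : b.evalO <;>
        simp [mapF, evalO, evalO_castc, evalO_mapF F a, evalO_mapF F b, ha, hb, F.map_tens]

variable [DecidableEq C]

theorem holesOf_fill (n : ℕ) {A B : C} {u : CTm C A B} (hu : u.holesOf = []) :
    ∀ {X Y : C} (t : CTm C X Y), (∀ p ∈ t.holesOf, p.1 = n → p.2 = (A, B)) →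
      (fill n u t).holesOf = t.holesOf.filter (·.1 ≠ n)
  | _, _, .of _, _ => rfl
  | _, _, .hole m A' B', ht => by
      by_cases hm : m = n
      · subst hm
        obtain ⟨rfl, rfl⟩ := Prod.ext_iff.mp (ht _ (List.mem_singleton_self _) rfl)
        simp [fill_hole_self, hu, holesOf]
      · simp [fill_hole_of_ne hm, holesOf, hm]
  | _, _, .seq a b, ht => by
      simp only [fill, holesOf, List.filter_append,
        holesOf_fill n hu a fun p hp => ht p (List.mem_append_left _ hp),
        holesOf_fill n hu b fun p hp => ht p (List.mem_append_right _ hp)]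
  | _, _, .par a b, ht => by
      simp only [fill, holesOf, List.filter_append,
        holesOf_fill n hu a fun p hp => ht p (List.mem_append_left _ hp),
        holesOf_fill n hu b fun p hp => ht p (List.mem_append_right _ hp)]

theorem mapF_fill [DecidableEq D] (F : SMF C D) (n : ℕ) {A B : C} (u : CTm C A B) :
    ∀ {X Y : C} (t : CTm C X Y), (∀ p ∈ t.holesOf, p.1 = n → p.2 = (A, B)) →
      (fill n u t).mapF F = fill n (u.mapF F) (t.mapF F)
  | _, _, .of _, _ => rfl
  | _, _, .hole m A' B', ht => by
      by_cases hm : m = n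
      · subst hm
        obtain ⟨rfl, rfl⟩ := Prod.ext_iff.mp (ht _ (List.mem_singleton_self _) rfl)
        rw [fill_hole_self]
        exact (fill_hole_self m (u.mapF F)).symm
      · rw [fill_hole_of_ne hm]
        exact (fill_hole_of_ne hm (u.mapF F) _ _).symm
  | _, _, .seq a b, ht => by
      simp only [fill, mapF,
        mapF_fill F n u a fun p hp => ht p (List.mem_append_left _ hp),
        mapF_fill F n u b fun p hp => ht p (List.mem_append_right _ hp)]
  | _, _, .par a b, ht => by
      simp only [fill, mapF, fill_castc,
        mapF_fill F n u a fun p hp => ht p (List.mem_append_left _ hp),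
        mapF_fill F n u b fun p hp => ht p (List.mem_append_right _ hp)]

theorem holesOf_fill_subset_holeSig {A B X Y : C} {k : ℕ} {ts : List (C × C)}
    {t : CTm C X Y} {u : CTm C A B} (hu : u.holesOf = [])
    (ht : t.holesOf ⊆ holeSig k ((A, B) :: ts)) :
    (fill k u t).holesOf ⊆ holeSig (k + 1) ts := by
  intro p hp
  rw [holesOf_fill k hu t (snd_eq_of_subset_holeSig_cons ht), List.mem_filter] at hp
  rcases List.mem_cons.mp (holeSig_cons k _ ts ▸ ht hp.1) with rfl | hp'
  · simp at hp
  · exact hp'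

end CTm

namespace CFG

theorem holesOf_rule_subset (𝒢 : CFG C) {l : List 𝒢.V} {Y : 𝒢.V} (r : 𝒢.Prd l Y) :
    (𝒢.rule r).holesOf ⊆ holeSig 0 (l.map 𝒢.ty) := by
  simpa [holeSig, List.range_eq_range'] using (𝒢.rule_holes r).subset

theorem langAt_eq_image [DecidableEq C] (𝒢 : CFG C) (S : 𝒢.V) {X Y : C} (h : 𝒢.ty S = (X, Y)) :
    𝒢.langAt S h = (fun g => eqToHom (congrArg Prod.fst h).symm ≫ g ≫
      eqToHom (congrArg Prod.snd h)) '' 𝒢.lang S := by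
  ext f
  simp [langAt, eq_comm]

/-- The grammar `Ψ ⨾ |Ctx(F)|`. -/
def map (F : SMF C D) (𝒢 : CFG C) : CFG D where
  V := 𝒢.V
  finV := 𝒢.finV
  ty v := (F.obj (𝒢.ty v).1, F.obj (𝒢.ty v).2)
  Prd := 𝒢.Prd
  finP := 𝒢.finP
  rule r := (𝒢.rule r).mapF F
  rule_holes r := by
    have := (𝒢.rule_holes r).map fun p => (p.1, F.obj p.2.1, F.obj p.2.2)
    rw [List.zip_map_right, List.map_map] at this
    rwa [CTm.holesOf_mapF, List.zip_map_right]

variable (F : SMF C D) {𝒢 : CFG C}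

mutual
def Deriv.map : ∀ {v : 𝒢.V}, 𝒢.Deriv v → (𝒢.map F).Deriv v
  | _, .node r ds => .node r ds.map
def DerivList.map : ∀ {l : List 𝒢.V}, 𝒢.DerivList l → (𝒢.map F).DerivList l
  | _, .nil => .nil
  | _, .cons d ds => .cons d.map ds.map
end

mutual
def Deriv.unmap : ∀ {v : 𝒢.V}, (𝒢.map F).Deriv v → 𝒢.Deriv v
  | _, .node r ds => .node r ds.unmap
def DerivList.unmap : ∀ {l : List 𝒢.V}, (𝒢.map F).DerivList l → 𝒢.DerivList l
  | _, .nil => .nil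
  | _, .cons d ds => .cons d.unmap ds.unmap
end

mutual
theorem Deriv.map_unmap : ∀ {v : 𝒢.V} (d : (𝒢.map F).Deriv v), (d.unmap F).map F = d
  | _, .node r ds => congrArg (Deriv.node r) ds.map_unmap
theorem DerivList.map_unmap :
    ∀ {l : List 𝒢.V} (ds : (𝒢.map F).DerivList l), (ds.unmap F).map F = ds
  | _, .nil => rfl
  | _, .cons d ds => congrArg₂ DerivList.cons d.map_unmap ds.map_unmap
end

variable [DecidableEq C]

mutual
theorem holesOf_evalTm : ∀ {v : 𝒢.V} (d : 𝒢.Deriv v), (evalTm d).holesOf = []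
  | _, .node r ds => holesOf_fillListFrom ds 0 (𝒢.holesOf_rule_subset r)
theorem holesOf_fillListFrom : ∀ {l : List 𝒢.V} (ds : 𝒢.DerivList l) {X Y : C} (k : ℕ)
    {t : CTm C X Y}, t.holesOf ⊆ holeSig k (l.map 𝒢.ty) → (fillListFrom k ds t).holesOf = []
  | _, .nil, _, _, _, _, ht => List.eq_nil_of_subset_nil ht
  | _, .cons d ds, _, _, k, _, ht =>
      holesOf_fillListFrom ds (k + 1) (CTm.holesOf_fill_subset_holeSig (holesOf_evalTm d) ht)
end

variable [DecidableEq D]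

mutual
theorem evalTm_map : ∀ {v : 𝒢.V} (d : 𝒢.Deriv v), evalTm (d.map F) = (evalTm d).mapF F
  | _, .node r ds => fillListFrom_map ds 0 (𝒢.holesOf_rule_subset r)
theorem fillListFrom_map : ∀ {l : List 𝒢.V} (ds : 𝒢.DerivList l) {X Y : C} (k : ℕ)
    {t : CTm C X Y}, t.holesOf ⊆ holeSig k (l.map 𝒢.ty) →
      fillListFrom k (ds.map F) (t.mapF F) = (fillListFrom k ds t).mapF F
  | _, .nil, _, _, _, _, _ => rfl
  | _, .cons d ds, _, _, k, t, ht => by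
      show fillListFrom (k + 1) (ds.map F) (CTm.fill k (evalTm (d.map F)) (t.mapF F)) = _
      rw [evalTm_map d]
      exact (congrArg (fillListFrom (𝒢 := 𝒢.map F) (k + 1) (ds.map F))
        (CTm.mapF_fill F k _ t (snd_eq_of_subset_holeSig_cons ht)).symm).trans
        (fillListFrom_map ds (k + 1) (CTm.holesOf_fill_subset_holeSig (holesOf_evalTm d) ht))
end

theorem lang_map (S : 𝒢.V) : (𝒢.map F).lang S = F.map '' 𝒢.lang S := by
  ext f
  constructor
  · rintro ⟨d, hd⟩
    rw [← d.map_unmap F, evalTm_map] at hd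
    obtain ⟨g, hg, rfl⟩ := Option.map_eq_some_iff.mp ((CTm.evalO_mapF F _).symm.trans hd)
    exact ⟨g, ⟨d.unmap F, hg⟩, rfl⟩
  · rintro ⟨g, ⟨d, hd⟩, rfl⟩
    refine ⟨d.map F, ?_⟩
    rw [evalTm_map]
    exact (CTm.evalO_mapF F _).trans (congrArg (Option.map F.map) hd)

theorem langAt_map (S : 𝒢.V) {X Y : C} (h : 𝒢.ty S = (X, Y)) :
    (𝒢.map F).langAt S (congrArg (Prod.map F.obj F.obj) h) = F.map '' 𝒢.langAt S h := by
  refine (langAt_eq_image (𝒢.map F) S _).trans ?_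
  rw [lang_map, langAt_eq_image]
  refine (Set.image_image _ _ _).trans ((Set.image_congr fun g _ => ?_).trans
    (Set.image_image _ _ _).symm)
  simp only [F.map_comp, SMF.map_eqToHom]
  rfl

end CFG

end ImageGrammar

/-- Context-free monoidal languages are closed under images of strict monoidal
functors. -/
theorem cf_functor_image (C : Type u) (D : Type u')
    [Category.{v} C] [Monoid C] [SMC C] [DecidableEq C]
    [Category.{v'} D] [Monoid D] [SMC D] [DecidableEq D]
    (F : SMF C D) (𝒢 : CFG C) (S : 𝒢.V) (X Y : C) (h : 𝒢.ty S = (X, Y)) :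
    ∃ (𝒢' : CFG D) (S' : 𝒢'.V) (h' : 𝒢'.ty S' = (F.obj X, F.obj Y)),
      𝒢'.langAt S' h' = F.map '' 𝒢.langAt S h :=
  ⟨𝒢.map F, S, _, CFG.langAt_map F S h⟩
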